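/- arXiv:2205.00611 — 4 statements merged into one kernel-verified Lean document; each statement's English description precedes it below -/
import Mathlib

section
/- Let n = 2^k be a power of 2 and d ≤ n an even integer, with n a prime power. Let w ∈ {k,−k}^d satisfy Σ_i w_i = 0, and let P = {i : w_i > 0}, N = {i : w_i < 0}, so |P| = |N| = d/2. Define the matrix M whose rows are indexed by set-multilinear monomials over the variable sets (X_i)_{i∈P}, columns by set-multilinear monomials over (X_i)_{i∈N}, and whose (m₁, m₂) entry is the coefficient of m₁·m₂ in NW_{n,d}. Then M is a permutation matrix; in particular, it has full rank n^{d/2}. -/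
/-!
Write a monomial of `NW` as `∏ⱼ x_{g(j),j}` with `g = φ⁻¹ ∘ f` for a polynomial `f` of degree
`< d/2`. Because `|P| = |N| = d/2` and the evaluation points are distinct, the Vandermonde
matrices show that `f ↦ f|_P` and `f ↦ f|_N` are both bijections from polynomials of degree
`< d/2` onto value vectors. The `(a, b)` entry of the matrix counts the `f` with `f|_P = a` and
`f|_N = b`, so it is `1` exactly when `b` is the restriction to `N` of the unique `f` that
interpolates `a` on `P`, and `0` otherwise.
-/

open MvPolynomial

/-- The Nisan–Wigderson polynomial `NW_{n,d}` with `n = 2^k`, over a field `K` of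
size `n` identified with `Fin n` via `φ`: the sum over all polynomials `f` of degree
`< d/2` (encoded by coefficient vectors `c : Fin (d/2) → K`) of `∏_{j ∈ [d]} x_{f(j), j}`.
Variables are indexed by pairs (column, row) in `Fin d × Fin n`. -/
noncomputable def NW (k d : ℕ) (K : Type) [Field K] [Fintype K]
    (φ : Fin (2 ^ k) ≃ K) (hd : d ≤ 2 ^ k) : MvPolynomial (Fin d × Fin (2 ^ k)) K :=
  ∑ c : Fin (d / 2) → K, ∏ j : Fin d,
    X (j, φ.symm (∑ t : Fin (d / 2), c t * (φ (Fin.castLE hd j)) ^ (t : ℕ)))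

/-- The exponent vector of the set-multilinear monomial `m₁ · m₂`, where `m₁` picks
one variable from each set `X_i` with `w i > 0` and `m₂` picks one from each set with
`w i < 0`. -/
noncomputable def expVec {d n : ℕ} (w : Fin d → ℤ)
    (a : {i : Fin d // 0 < w i} → Fin n) (b : {i : Fin d // w i < 0} → Fin n) :
    (Fin d × Fin n) →₀ ℕ :=
  Finsupp.equivFunOnFinite.symm fun p =>
    if h : 0 < w p.1 then (if p.2 = a ⟨p.1, h⟩ then 1 else 0)
    else if h' : w p.1 < 0 then (if p.2 = b ⟨p.1, h'⟩ then 1 else 0) else 0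

/-- The partial derivative matrix `M_w(f)`: rows indexed by set-multilinear monomials
over the positive sets, columns by set-multilinear monomials over the negative sets,
entries the coefficients of the products in `f`. -/
noncomputable def Mw {d n : ℕ} {K : Type} [Field K] (w : Fin d → ℤ)
    (f : MvPolynomial (Fin d × Fin n) K) :
    Matrix ({i : Fin d // 0 < w i} → Fin n) ({i : Fin d // w i < 0} → Fin n) K :=
  fun a b => MvPolynomial.coeff (expVec w a b) f

open Finset Function

theorem card_pos_add_card_neg {ι : Type*} [Fintype ι] {w : ι → ℤ} (hw : ∀ i, w i ≠ 0) :
    Fintype.card {i // 0 < w i} + Fintype.card {i // w i < 0} = Fintype.card ι := by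
  have hneg : Fintype.card {i // w i < 0} = Fintype.card {i // ¬ 0 < w i} :=
    Fintype.card_congr (Equiv.subtypeEquivRight fun i => by have := hw i; omega)
  have := Fintype.card_subtype_le fun i => 0 < w i
  rw [hneg, Fintype.card_subtype_compl]
  omega

theorem card_pos_eq_card_neg {ι : Type*} [Fintype ι] {w : ι → ℤ} {k : ℤ} (hk : 0 < k)
    (hw : ∀ i, w i = k ∨ w i = -k) (hsum : ∑ i, w i = 0) :
    Fintype.card {i // 0 < w i} = Fintype.card {i // w i < 0} := by
  classical
  have hsign : ∀ i, w i = k * ((if 0 < w i then 1 else 0) - (if w i < 0 then 1 else 0)) := by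
    intro i
    rcases hw i with h | h <;> rw [h] <;> split_ifs <;> omega
  rw [Finset.sum_congr rfl fun i _ => hsign i, ← Finset.mul_sum, Finset.sum_sub_distrib,
    Finset.sum_boole, Finset.sum_boole, mul_eq_zero, sub_eq_zero] at hsum
  simpa [Fintype.card_subtype, hk.ne'] using hsum

theorem card_pos_eq_half_and_card_neg_eq_half {d : ℕ} {w : Fin d → ℤ} {k : ℤ} (hk : 0 < k)
    (hw : ∀ i, w i = k ∨ w i = -k) (hsum : ∑ i, w i = 0) :
    Fintype.card {i // 0 < w i} = d / 2 ∧ Fintype.card {i // w i < 0} = d / 2 := by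
  have hcard := card_pos_add_card_neg (w := w) fun i => by rcases hw i with h | h <;> omega
  have hbal := card_pos_eq_card_neg hk hw hsum
  rw [Fintype.card_fin] at hcard
  omega

section GraphExponent

variable {ι σ : Type*} [Fintype ι]

noncomputable def graphExp (s : ι → σ) : ι × σ →₀ ℕ := ∑ j, Finsupp.single (j, s j) 1

theorem graphExp_apply [DecidableEq σ] (s : ι → σ) (j : ι) (y : σ) :
    graphExp s (j, y) = if y = s j then 1 else 0 := by
  classical
  rw [graphExp, Finsupp.finsetSum_apply, Finset.sum_eq_single j]
  · simp [Finsupp.single_apply, eq_comm]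
  · intro i _ hij
    simp [hij]
  · simp

theorem graphExp_injective : Injective (graphExp : (ι → σ) → ι × σ →₀ ℕ) := by
  classical
  intro s t h
  funext j
  simpa [graphExp_apply] using congr($h (j, s j))

theorem prod_X_eq_monomial_graphExp {R : Type*} [CommSemiring R] (s : ι → σ) :
    ∏ j, (X (j, s j) : MvPolynomial (ι × σ) R) = monomial (graphExp s) 1 :=
  (monomial_sum_one _ _).symm

end GraphExponent

section SignJoin

variable {d n : ℕ} {w : Fin d → ℤ}

def signJoin (hw : ∀ i, w i ≠ 0) (a : {i // 0 < w i} → Fin n) (b : {i // w i < 0} → Fin n) :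
    Fin d → Fin n :=
  fun j => if h : 0 < w j then a ⟨j, h⟩ else b ⟨j, lt_of_le_of_ne (not_lt.1 h) (hw j)⟩

theorem expVec_eq_graphExp (hw : ∀ i, w i ≠ 0) (a : {i // 0 < w i} → Fin n)
    (b : {i // w i < 0} → Fin n) : expVec w a b = graphExp (signJoin hw a b) := by
  ext ⟨j, y⟩
  rw [graphExp_apply, expVec, Finsupp.coe_equivFunOnFinite_symm, signJoin]
  by_cases h : 0 < w j
  · simp [h]
  · simp [h, lt_of_le_of_ne (not_lt.1 h) (hw j)]

theorem eq_signJoin_iff (hw : ∀ i, w i ≠ 0) (a : {i // 0 < w i} → Fin n)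
    (b : {i // w i < 0} → Fin n) (s : Fin d → Fin n) :
    s = signJoin hw a b ↔
      (fun i : {i // 0 < w i} => s i) = a ∧ (fun i : {i // w i < 0} => s i) = b := by
  constructor
  · rintro rfl
    refine ⟨funext fun i => dif_pos i.2, funext fun i => ?_⟩
    simp [signJoin, not_lt.2 i.2.le]
  · rintro ⟨rfl, rfl⟩
    funext j
    unfold signJoin
    split_ifs <;> rfl

theorem Mw_sum_prod_X {K : Type} [Field K] (hw : ∀ i, w i ≠ 0) {C : Type*} [Fintype C]
    (G : C → Fin d → Fin n) (a : {i // 0 < w i} → Fin n) (b : {i // w i < 0} → Fin n) :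
    Mw w (∑ c, ∏ j, X (j, G c j) : MvPolynomial (Fin d × Fin n) K) a b =
      #{c | (fun i : {i // 0 < w i} => G c i) = a ∧ (fun i : {i // w i < 0} => G c i) = b} := by
  classical
  simp only [Mw, coeff_sum, prod_X_eq_monomial_graphExp, coeff_monomial, expVec_eq_graphExp hw,
    graphExp_injective.eq_iff, eq_signJoin_iff, Finset.sum_boole]

end SignJoin

theorem bijective_sum_mul_pow {K ι : Type*} [Field K] [Fintype ι] {m : ℕ}
    (hm : Fintype.card ι = m) {x : ι → K} (hx : Injective x) :
    Bijective fun (c : Fin m → K) (i : ι) => ∑ t : Fin m, c t * x i ^ (t : ℕ) := by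
  classical
  let e := Fintype.equivFinOfCardEq hm
  let V := Matrix.vandermonde (x ∘ e.symm)
  have hV : IsUnit V := by
    rw [Matrix.isUnit_iff_isUnit_det, isUnit_iff_ne_zero, Matrix.det_vandermonde_ne_zero_iff]
    exact hx.comp e.symm.injective
  have hfactor : (fun (c : Fin m → K) (i : ι) => ∑ t : Fin m, c t * x i ^ (t : ℕ)) =
      (e.arrowCongr (Equiv.refl K)).symm ∘ V.mulVec := by
    ext c i
    simp [V, Matrix.mulVec, dotProduct, mul_comm]
  rw [hfactor]
  exact (Equiv.bijective _).comp
    ⟨Matrix.mulVec_injective_iff_isUnit.2 hV, Matrix.mulVec_surjective_iff_isUnit.2 hV⟩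

theorem card_filter_eq_and_eq {C α β : Type*} [Fintype C] [DecidableEq α] [DecidableEq β]
    (f : C ≃ α) (g : C → β) (a : α) (b : β) :
    #{c | f c = a ∧ g c = b} = if b = g (f.symm a) then 1 else 0 := by
  split_ifs with h
  · rw [Finset.card_eq_one]
    refine ⟨f.symm a, Finset.ext fun c => ?_⟩
    simp only [Finset.mem_filter, Finset.mem_univ, true_and, Finset.mem_singleton,
      ← Equiv.eq_symm_apply]
    exact ⟨And.left, fun hc => ⟨hc, hc ▸ h.symm⟩⟩
  · rw [Finset.card_eq_zero, Finset.filter_eq_empty_iff]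
    rintro c - ⟨rfl, rfl⟩
    simp at h

theorem Matrix.rank_eq_card_of_eq_ite_equiv {m n K : Type*} [Fintype m] [Fintype n]
    [DecidableEq n] [Field K] (e : m ≃ n) {M : Matrix m n K}
    (hM : ∀ a b, M a b = if b = e a then 1 else 0) : M.rank = Fintype.card n := by
  have hsub : M = (1 : Matrix n n K).submatrix e (Equiv.refl n) := by
    ext a b
    simp [hM, Matrix.one_apply, eq_comm]
  rw [hsub, Matrix.rank_submatrix, Matrix.rank_one]

theorem stmt1_general (k d : ℕ) (hk : 1 ≤ k) (hd : d ≤ 2 ^ k)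
    (K : Type) [Field K] [Fintype K]
    (φ : Fin (2 ^ k) ≃ K)
    (w : Fin d → ℤ) (hw : ∀ i, w i = k ∨ w i = -(k : ℤ)) (hsum : ∑ i, w i = 0) :
    (∃ e : ({i : Fin d // 0 < w i} → Fin (2 ^ k)) ≃ ({i : Fin d // w i < 0} → Fin (2 ^ k)),
        ∀ a b, Mw w (NW k d K φ hd) a b = if b = e a then 1 else 0) ∧
      (Mw w (NW k d K φ hd)).rank = (2 ^ k) ^ (d / 2) := by
  classical
  have hw0 : ∀ i, w i ≠ 0 := fun i => by rcases hw i with h | h <;> omega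
  obtain ⟨hP, hN⟩ := card_pos_eq_half_and_card_neg_eq_half (by omega) hw hsum
  let G : (Fin (d / 2) → K) → Fin d → Fin (2 ^ k) :=
    fun c j => φ.symm (∑ t : Fin (d / 2), c t * φ (Fin.castLE hd j) ^ (t : ℕ))
  have hG : ∀ (p : Fin d → Prop) [Fintype {i // p i}], Fintype.card {i // p i} = d / 2 →
      Bijective fun c (i : {i // p i}) => G c i := fun p _ hp =>
    (Equiv.piCongrRight fun _ => φ.symm).bijective.comp <| bijective_sum_mul_pow hp <|
      φ.injective.comp ((Fin.castLE_injective hd).comp Subtype.val_injective)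
  let fP := Equiv.ofBijective _ (hG _ hP)
  let fN := Equiv.ofBijective _ (hG _ hN)
  have hM : ∀ a b, Mw w (NW k d K φ hd) a b = if b = (fP.symm.trans fN) a then 1 else 0 := by
    intro a b
    have hcount : #{c | fP c = a ∧ fN c = b} = if b = fN (fP.symm a) then 1 else 0 :=
      card_filter_eq_and_eq fP fN a b
    rw [show NW k d K φ hd = ∑ c, ∏ j, X (j, G c j) from rfl, Mw_sum_prod_X hw0]
    exact (congrArg Nat.cast hcount).trans (by push_cast; rfl)
  refine ⟨⟨_, hM⟩, ?_⟩
  rw [Matrix.rank_eq_card_of_eq_ite_equiv _ hM, Fintype.card_fun, Fintype.card_fin, hN]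

/-- for a balanced word `w ∈ {k,-k}^d`, the partial derivative matrix of
`NW_{n,d}` (with `n = 2^k`) is a permutation matrix; in particular it has full rank
`n^{d/2}`. -/
theorem stmt1 (k d : ℕ) (hk : 1 ≤ k) (hd2 : 2 ∣ d) (hd : d ≤ 2 ^ k)
    (K : Type) [Field K] [Fintype K] (hK : Fintype.card K = 2 ^ k)
    (φ : Fin (2 ^ k) ≃ K)
    (w : Fin d → ℤ) (hw : ∀ i, w i = k ∨ w i = -(k : ℤ)) (hsum : ∑ i, w i = 0) :
    (∃ e : ({i : Fin d // 0 < w i} → Fin (2 ^ k)) ≃ ({i : Fin d // w i < 0} → Fin (2 ^ k)),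
        ∀ a b, Mw w (NW k d K φ hd) a b = if b = e a then 1 else 0) ∧
      (Mw w (NW k d K φ hd)).rank = (2 ^ k) ^ (d / 2) :=
  stmt1_general k d hk hd K φ w hw hsum
end

section
/- Let (S_1,...,S_t) be a partition of [d], let w ∈ ℝ^d with nonzero entries, and for each i let f_i be set-multilinear with respect to (X_j)_{j∈S_i}. If f = f_1·f_2···f_t, then rank(M_w(f)) = ∏_{i∈[t]} rank(M_{w|_{S_i}}(f_i)), where M_w is the partial derivative matrix; equivalently, M_w(f) equals the tensor (Kronecker) product of the matrices M_{w|_{S_i}}(f_i) up to row and column permutations. -/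
/-!
The polynomials `f i` involve pairwise disjoint sets of variables, so the coefficient of a
set-multilinear monomial in `∏ i, f i` is the product of the coefficients in the `f i` of its
restrictions to the parts `S i`. After regrouping rows and columns along the partition,
`M_w(∏ i, f i)` is therefore the Kronecker product of the matrices `M_{w|S_i}(f i)`. Rank is
multiplicative under Kronecker products: a factorization `A = C * B` through `Fin A.rank` with
`C` left-invertible and `B` right-invertible tensors to such a factorization of `A ⊗ₖ B`.
-/

open MvPolynomial

variable {d : ℕ} {K : Type} [Field K] {nsz : Fin d → ℕ}

/-- Set-multilinearity with respect to the sub-tuple of variable sets indexed by `S`,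
for variables `Σ i : Fin d, Fin (nsz i)` (set `X_i` has `nsz i` variables). -/
def IsSML (S : Finset (Fin d)) (P : MvPolynomial (Σ i : Fin d, Fin (nsz i)) K) : Prop :=
  ∀ m ∈ P.support,
    (∀ v, m v ≤ 1) ∧
    (∀ i : Fin d, i ∈ S → (m.support.filter fun v => v.1 = i).card = 1) ∧
    (∀ i : Fin d, i ∉ S → ∀ r : Fin (nsz i), m ⟨i, r⟩ = 0)

/-- Exponent vector of the set-multilinear monomial over the sets indexed by `S`
determined by `a` (positive part of `w` within `S`) and `b` (negative part). -/
noncomputable def expVecS (w : Fin d → ℝ) (S : Finset (Fin d))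
    (a : ∀ i : {i : Fin d // i ∈ S ∧ 0 < w i}, Fin (nsz i))
    (b : ∀ i : {i : Fin d // i ∈ S ∧ w i < 0}, Fin (nsz i)) :
    (Σ i : Fin d, Fin (nsz i)) →₀ ℕ :=
  Finsupp.equivFunOnFinite.symm fun p =>
    if h : p.1 ∈ S ∧ 0 < w p.1 then (if p.2 = a ⟨p.1, h⟩ then 1 else 0)
    else if h' : p.1 ∈ S ∧ w p.1 < 0 then (if p.2 = b ⟨p.1, h'⟩ then 1 else 0) else 0

/-- The partial derivative matrix `M_{w|_S}(f)` of `f` relative to the restriction of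
the word `w` to the indices in `S`. -/
noncomputable def MwS (w : Fin d → ℝ) (S : Finset (Fin d))
    (f : MvPolynomial (Σ i : Fin d, Fin (nsz i)) K) :
    Matrix (∀ i : {i : Fin d // i ∈ S ∧ 0 < w i}, Fin (nsz i))
      (∀ i : {i : Fin d // i ∈ S ∧ w i < 0}, Fin (nsz i)) K :=
  fun a b => MvPolynomial.coeff (expVecS w S a b) f

open Function Matrix Kronecker

namespace Matrix

theorem rank_eq_card_of_eq_mul {R : Type*} [CommRing R] [StrongRankCondition R]
    {m n r : Type*} [Fintype m] [Fintype n] [Fintype r] [DecidableEq r]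
    {A : Matrix m n R} {C : Matrix m r R} {B : Matrix r n R}
    {L : Matrix r m R} {B' : Matrix n r R}
    (hA : A = C * B) (hC : L * C = 1) (hB : B * B' = 1) :
    A.rank = Fintype.card r := by
  refine le_antisymm ?_ ?_
  · calc A.rank ≤ C.rank := hA ▸ rank_mul_le_left C B
      _ ≤ Fintype.card r := rank_le_card_width C
  · have hLAB : L * A * B' = 1 := by
      rw [hA, ← Matrix.mul_assoc, hC, Matrix.one_mul, hB]
    calc Fintype.card r = (L * A * B').rank := by rw [hLAB, rank_one]
      _ ≤ (L * A).rank := rank_mul_le_left _ _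
      _ ≤ A.rank := rank_mul_le_right _ _

theorem exists_rank_factorization {K : Type*} [Field K] {m n : Type*} [Fintype m] [Fintype n]
    [DecidableEq m] [DecidableEq n] (A : Matrix m n K) :
    ∃ (C : Matrix m (Fin A.rank) K) (B : Matrix (Fin A.rank) n K)
      (L : Matrix (Fin A.rank) m K) (B' : Matrix n (Fin A.rank) K),
      A = C * B ∧ L * C = 1 ∧ B * B' = 1 := by
  set V := LinearMap.range A.mulVecLin
  let b : Module.Basis (Fin A.rank) K V := Module.finBasisOfFinrankEq K V rfl
  obtain ⟨g, hg⟩ := V.subtype.exists_leftInverse_of_injective V.ker_subtype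
  obtain ⟨h, hh⟩ :=
    A.mulVecLin.rangeRestrict.exists_rightInverse_of_surjective A.mulVecLin.range_rangeRestrict
  refine ⟨LinearMap.toMatrix b (Pi.basisFun K m) V.subtype,
    LinearMap.toMatrix (Pi.basisFun K n) b A.mulVecLin.rangeRestrict,
    LinearMap.toMatrix (Pi.basisFun K m) b g,
    LinearMap.toMatrix b (Pi.basisFun K n) h, ?_, ?_, ?_⟩
  · rw [← LinearMap.toMatrix_comp, A.mulVecLin.subtype_comp_codRestrict]
    exact (LinearMap.toMatrix'_toLin' A).symm
  · rw [← LinearMap.toMatrix_comp, hg, LinearMap.toMatrix_id]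
  · rw [← LinearMap.toMatrix_comp, hh, LinearMap.toMatrix_id]

theorem rank_kronecker {K : Type*} [Field K] {m n m' n' : Type*} [Fintype m] [Fintype n]
    [Fintype m'] [Fintype n'] (A : Matrix m n K) (B : Matrix m' n' K) :
    (A ⊗ₖ B).rank = A.rank * B.rank := by
  classical
  obtain ⟨C₁, B₁, L₁, B₁', hA, hC₁, hB₁⟩ := exists_rank_factorization A
  obtain ⟨C₂, B₂, L₂, B₂', hB, hC₂, hB₂⟩ := exists_rank_factorization B
  rw [rank_eq_card_of_eq_mul (C := C₁ ⊗ₖ C₂) (B := B₁ ⊗ₖ B₂) (L := L₁ ⊗ₖ L₂) (B' := B₁' ⊗ₖ B₂')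
      (by rw [← mul_kronecker_mul, ← hA, ← hB])
      (by rw [← mul_kronecker_mul, hC₁, hC₂, one_kronecker_one])
      (by rw [← mul_kronecker_mul, hB₁, hB₂, one_kronecker_one]),
    Fintype.card_prod, Fintype.card_fin, Fintype.card_fin]

def piKronecker {ι R : Type*} [Fintype ι] [CommMonoid R] {α β : ι → Type*}
    (M : ∀ j, Matrix (α j) (β j) R) : Matrix (∀ j, α j) (∀ j, β j) R :=
  of fun a b => ∏ j, M j (a j) (b j)

theorem piKronecker_fin_succ {R : Type*} [CommMonoid R] {t : ℕ} {α β : Fin (t + 1) → Type*}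
    (M : ∀ j, Matrix (α j) (β j) R) :
    piKronecker M = reindex (Fin.consEquiv α) (Fin.consEquiv β)
      (M 0 ⊗ₖ piKronecker fun j => M j.succ) := by
  ext a b
  simp [piKronecker, Fin.prod_univ_succ, Fin.consEquiv, Fin.tail]

theorem rank_piKronecker {K : Type*} [Field K] :
    ∀ {t : ℕ} {α β : Fin t → Type*} [∀ j, Fintype (α j)] [∀ j, Fintype (β j)]
      (M : ∀ j, Matrix (α j) (β j) K), (piKronecker M).rank = ∏ j, (M j).rank
  | 0, α, β, _, _, M => by
    classical
    have : piKronecker M =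
        reindex (Equiv.refl _) (Equiv.ofUnique _ _) (1 : Matrix (∀ j, α j) (∀ j, α j) K) := by
      ext a b
      simp [piKronecker, one_apply, Subsingleton.elim a ((Equiv.ofUnique _ _).symm b)]
    rw [this, rank_reindex, rank_one]
    simp
  | t + 1, α, β, _, _, M => by
    rw [piKronecker_fin_succ, rank_reindex, rank_kronecker, rank_piKronecker, Fin.prod_univ_succ]

end Matrix

namespace MvPolynomial

variable {σ R : Type*} [CommSemiring R]

theorem apply_eq_zero_of_mem_supported {s : Set σ} {p : MvPolynomial σ R}
    (hp : p ∈ supported R s) {n : σ →₀ ℕ} (hn : n ∈ p.support) {v : σ} (hv : v ∉ s) :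
    n v = 0 := by
  by_contra h
  exact hv (mem_supported.mp hp <|
    (mem_vars_iff_mem_support v).mpr ⟨n, hn, Finsupp.mem_support_iff.mpr h⟩)

theorem coeff_mul_of_mem_supported_compl {s : Set σ} [DecidablePred (· ∈ s)]
    {p q : MvPolynomial σ R} (hp : p ∈ supported R s) (hq : q ∈ supported R sᶜ)
    (m : σ →₀ ℕ) :
    coeff m (p * q) = coeff (m.filter (· ∈ s)) p * coeff (m.filter (· ∉ s)) q := by
  classical
  rw [coeff_mul, Finset.sum_eq_single_of_mem (m.filter (· ∈ s), m.filter (· ∉ s))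
    (Finset.HasAntidiagonal.mem_antidiagonal.mpr (Finsupp.filter_add_filter_not m _))]
  rintro ⟨a, b⟩ hab hne
  by_cases ha : a ∈ p.support
  swap
  · rw [notMem_support_iff.mp ha, zero_mul]
  by_cases hb : b ∈ q.support
  swap
  · rw [notMem_support_iff.mp hb, mul_zero]
  have ha₁ : a.filter (· ∈ s) = a := (Finsupp.filter_eq_self_iff _ _).mpr fun v hv =>
    by_contra fun h => hv (apply_eq_zero_of_mem_supported hp ha h)
  have ha₂ : a.filter (· ∉ s) = 0 := (Finsupp.filter_eq_zero_iff _ _).mpr fun v hv =>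
    apply_eq_zero_of_mem_supported hp ha hv
  have hb₁ : b.filter (· ∈ s) = 0 := (Finsupp.filter_eq_zero_iff _ _).mpr fun v hv =>
    apply_eq_zero_of_mem_supported hq hb (not_not_intro hv)
  have hb₂ : b.filter (· ∉ s) = b := (Finsupp.filter_eq_self_iff _ _).mpr fun v hv h =>
    hv (apply_eq_zero_of_mem_supported hq hb (not_not_intro h))
  refine absurd ?_ hne
  rw [← Finset.HasAntidiagonal.mem_antidiagonal.mp hab, Finsupp.filter_add, Finsupp.filter_add,
    ha₁, ha₂, hb₁, hb₂, add_zero, zero_add]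

theorem coeff_prod_of_mem_supported {ι : Type*} {U : ι → Set σ} [∀ j, DecidablePred (· ∈ U j)]
    (hU : Pairwise (Disjoint on U)) {f : ι → MvPolynomial σ R}
    (hf : ∀ j, f j ∈ supported R (U j)) (T : Finset ι) (m : σ →₀ ℕ)
    (hm : ∀ v ∈ m.support, ∃ j ∈ T, v ∈ U j) :
    coeff m (∏ j ∈ T, f j) = ∏ j ∈ T, coeff (m.filter (· ∈ U j)) (f j) := by
  classical
  induction T using Finset.induction_on generalizing m with
  | empty =>
    obtain rfl : m = 0 := Finsupp.support_eq_empty.mp <|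
      Finset.eq_empty_of_forall_notMem fun v hv => by simpa using hm v hv
    simp
  | @insert j T hj ih =>
    have hUj : ∀ k ∈ T, U k ⊆ (U j)ᶜ := fun k hk =>
      Set.subset_compl_iff_disjoint_right.mpr (hU fun h => hj (h ▸ hk))
    have hrest : ∏ k ∈ T, f k ∈ supported R (U j)ᶜ :=
      Subalgebra.prod_mem _ fun k hk => supported_mono (hUj k hk) (hf k)
    have hm' : ∀ v ∈ (m.filter (· ∉ U j)).support, ∃ k ∈ T, v ∈ U k := by
      intro v hv
      rw [Finsupp.support_filter, Finset.mem_filter] at hv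
      obtain ⟨k, hk, hvk⟩ := hm v hv.1
      rcases Finset.mem_insert.mp hk with rfl | hk
      · exact absurd hvk hv.2
      · exact ⟨k, hk, hvk⟩
    rw [Finset.prod_insert hj, Finset.prod_insert hj,
      coeff_mul_of_mem_supported_compl (hf j) hrest, ih _ hm']
    congr 1
    refine Finset.prod_congr rfl fun k hk => ?_
    congr 1
    ext v
    by_cases hv : v ∈ U k
    · simp [hv, show v ∉ U j from hUj k hk hv]
    · simp [hv]

end MvPolynomial

theorem IsSML.mem_supported {S : Finset (Fin d)}
    {P : MvPolynomial (Σ i : Fin d, Fin (nsz i)) K} (hP : IsSML S P) :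
    P ∈ supported K {v | v.1 ∈ S} := by
  rw [MvPolynomial.mem_supported]
  intro v hv
  obtain ⟨n, hn, hnv⟩ := (mem_vars_iff_mem_support v).mp hv
  by_contra hS
  exact Finsupp.mem_support_iff.mp hnv ((hP n hn).2.2 v.1 hS v.2)

theorem expVecS_univ_filter (w : Fin d → ℝ) (T : Finset (Fin d))
    (a : ∀ i : {i : Fin d // i ∈ Finset.univ ∧ 0 < w i}, Fin (nsz i))
    (b : ∀ i : {i : Fin d // i ∈ Finset.univ ∧ w i < 0}, Fin (nsz i)) :
    (expVecS w Finset.univ a b).filter (fun v => v.1 ∈ T)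
      = expVecS w T (fun i => a ⟨i.1, Finset.mem_univ _, i.2.2⟩)
          (fun i => b ⟨i.1, Finset.mem_univ _, i.2.2⟩) := by
  ext v
  rw [Finsupp.filter_apply]
  by_cases hT : v.1 ∈ T
  · by_cases hpos : 0 < w v.1
    · simp [expVecS, hpos, hT]
    · by_cases hneg : w v.1 < 0
      · simp [expVecS, hpos, hneg, hT]
      · simp [expVecS, hpos, hneg]
  · simp [expVecS, hT]

noncomputable def equivPiOfPartition {α ι : Type*} [Fintype α] (S : ι → Finset α)
    (hS : ∀ x, ∃! j, x ∈ S j) (Q : α → Prop) (F : α → Type*) :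
    (∀ i : {i // i ∈ (Finset.univ : Finset α) ∧ Q i}, F i) ≃
      ∀ j, ∀ i : {i // i ∈ S j ∧ Q i}, F i where
  toFun a _ i := a ⟨i.1, Finset.mem_univ _, i.2.2⟩
  invFun g i := g (hS i.1).exists.choose ⟨i.1, (hS i.1).exists.choose_spec, i.2.2⟩
  left_inv _ := rfl
  right_inv g := by
    funext j ⟨x, hx, _⟩
    obtain rfl : (hS x).exists.choose = j := (hS x).unique (hS x).exists.choose_spec hx
    rfl

theorem MwS_univ_prod {t : ℕ} (w : Fin d → ℝ)
    (S : Fin t → Finset (Fin d)) (hS : ∀ x, ∃! j, x ∈ S j)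
    (f : Fin t → MvPolynomial (Σ i : Fin d, Fin (nsz i)) K) (hf : ∀ j, IsSML (S j) (f j)) :
    MwS w Finset.univ (∏ j, f j)
      = (piKronecker fun j => MwS w (S j) (f j)).submatrix
          (equivPiOfPartition S hS (0 < w ·) (fun i => Fin (nsz i)))
          (equivPiOfPartition S hS (w · < 0) (fun i => Fin (nsz i))) := by
  ext a b
  have hdisj : Pairwise (Disjoint on fun j => {v : Σ i, Fin (nsz i) | v.1 ∈ S j}) :=
    fun j k hjk => Set.disjoint_left.mpr fun v hj hk => hjk ((hS v.1).unique hj hk)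
  rw [MwS, coeff_prod_of_mem_supported hdisj (fun j => (hf j).mem_supported) Finset.univ _
    fun v _ => ⟨_, Finset.mem_univ _, (hS v.1).exists.choose_spec⟩]
  exact Finset.prod_congr rfl fun j _ =>
    congrArg (coeff · (f j)) (expVecS_univ_filter w (S j) a b)

theorem stmt3_general (d t : ℕ) (K : Type) [Field K] (nsz : Fin d → ℕ)
    (w : Fin d → ℝ)
    (S : Fin t → Finset (Fin d))
    (hpart : ∀ x : Fin d, ∃! i, x ∈ S i)
    (f : Fin t → MvPolynomial (Σ i : Fin d, Fin (nsz i)) K)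
    (hf : ∀ i, IsSML (S i) (f i)) :
    (MwS w Finset.univ (∏ i, f i)).rank = ∏ i, (MwS w (S i) (f i)).rank := by
  rw [MwS_univ_prod w S hpart f hf, rank_submatrix, rank_piKronecker]

/-- multiplicativity of the rank of the partial derivative matrix.
If `(S_1,…,S_t)` is a partition of `[d]`, `w` has nonzero entries with `|X_i| = 2^{|w_i|}`,
each `f_i` is set-multilinear with respect to `(X_j)_{j ∈ S_i}`, and `f = f_1 ⋯ f_t`,
then `rank(M_w(f)) = ∏_i rank(M_{w|_{S_i}}(f_i))`. -/
theorem stmt3 (d t : ℕ) (K : Type) [Field K] (nsz : Fin d → ℕ)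
    (w : Fin d → ℝ) (hw : ∀ i, w i ≠ 0)
    (hsz : ∀ i, (nsz i : ℝ) = 2 ^ |w i|)
    (S : Fin t → Finset (Fin d))
    (hpart : ∀ x : Fin d, ∃! i, x ∈ S i)
    (f : Fin t → MvPolynomial (Σ i : Fin d, Fin (nsz i)) K)
    (hf : ∀ i, IsSML (S i) (f i)) :
    (MwS w Finset.univ (∏ i, f i)).rank = ∏ i, (MwS w (S i) (f i)).rank :=
  stmt3_general d t K nsz w S hpart f hf
end

section
/- Let T ≥ 2 be a real number and let (S_1,...,S_ℓ) be a partition of a finite set [d] such that each |S_j| < T. Then there exists a coarsening (S'_1,...,S'_{ℓ'}) of this partition such that T/2 ≤ |S'_j| ≤ 3T/2 for every j, provided d ≥ T/2. Consequently, 2d/(3T) ≤ ℓ' ≤ 2d/T. -/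
/-!
Give the block `S_j` the weight `|S_j|` and partition the set of blocks instead of `[d]`.
Among the partitions of the blocks into groups of weight `< T` (the partition into singletons
is one), take one with the fewest groups. Two groups of weight `< T/2` could be merged into a
single group of weight `< T`, so at most one group is that light; since the total weight is
`d ≥ T/2`, such a group is not alone, and merging it into any other group gives a group of
weight in `[T/2, 3T/2)`. Counting the `ℓ'` groups against the total weight `d` gives the bounds
on `ℓ'`.
-/

open Finset

namespace Finpartition

section Merge

variable {α : Type*} [GeneralizedBooleanAlgebra α] [DecidableEq α] {a b c : α}
  (P : Finpartition a)

def merge (hb : b ∈ P.parts) (hc : c ∈ P.parts) : Finpartition a :=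
  (P.avoid (b ⊔ c)).extend (ne_bot_of_le_ne_bot (P.ne_bot hb) le_sup_left)
    disjoint_sdiff_self_left (sdiff_sup_cancel (sup_le (P.le hb) (P.le hc)))

theorem parts_merge_subset (hb : b ∈ P.parts) (hc : c ∈ P.parts) :
    (P.merge hb hc).parts ⊆ insert (b ⊔ c) (P.parts \ {b, c}) := by
  refine insert_subset_insert _ fun e he => ?_
  obtain ⟨d, hd, hdbc, rfl⟩ := (P.mem_avoid).1 he
  have hdb : d ≠ b := fun h => hdbc (h ▸ le_sup_left)
  have hdc : d ≠ c := fun h => hdbc (h ▸ le_sup_right)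
  have hdisj : Disjoint d (b ⊔ c) :=
    disjoint_sup_right.2 ⟨P.disjoint hd hb hdb, P.disjoint hd hc hdc⟩
  rw [hdisj.sdiff_eq_left]
  simp [hd, hdb, hdc]

theorem card_parts_merge_lt (hb : b ∈ P.parts) (hc : c ∈ P.parts) (hbc : b ≠ c) :
    #(P.merge hb hc).parts < #P.parts := by
  have hpair : {b, c} ⊆ P.parts := insert_subset hb (singleton_subset_iff.2 hc)
  have h2 : #({b, c} : Finset α) = 2 := card_pair hbc
  calc #(P.merge hb hc).parts ≤ #(P.parts \ {b, c}) + 1 :=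
        (card_le_card (P.parts_merge_subset hb hc)).trans (card_insert_le _ _)
    _ < #P.parts := by
        rw [card_sdiff_of_subset hpair, h2]
        have := card_le_card hpair
        omega

end Merge

theorem exists_filter_eq_mem_parts {ι : Type*} [Fintype ι] [DecidableEq ι]
    (P : Finpartition (univ : Finset ι)) :
    ∃ c : ι → Fin #P.parts, ∀ j, (univ.filter fun i => c i = j) ∈ P.parts := by
  let e := P.parts.equivFin
  refine ⟨fun i => e ⟨P.part i, P.part_mem.2 (mem_univ i)⟩, fun j => ?_⟩
  convert (e.symm j).2
  ext i
  simp [← Equiv.eq_symm_apply, Subtype.ext_iff, P.part_eq_iff_mem (e.symm j).2]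

section Sum

variable {α M : Type*} [DecidableEq α] {s : Finset α} (P : Finpartition s)

theorem sum_sum_parts [AddCommMonoid M] (f : α → M) :
    ∑ t ∈ P.parts, ∑ i ∈ t, f i = ∑ i ∈ s, f i := by
  conv_rhs => rw [← P.biUnion_parts]
  exact (sum_biUnion P.supIndep.pairwiseDisjoint).symm

theorem card_parts_nsmul_le_sum [AddCommMonoid M] [PartialOrder M] [IsOrderedAddMonoid M]
    {f : α → M} {m : M} (h : ∀ t ∈ P.parts, m ≤ ∑ i ∈ t, f i) :
    #P.parts • m ≤ ∑ i ∈ s, f i :=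
  P.sum_sum_parts f ▸ card_nsmul_le_sum _ _ _ h

theorem sum_le_card_parts_nsmul [AddCommMonoid M] [PartialOrder M] [IsOrderedAddMonoid M]
    {f : α → M} {m : M} (h : ∀ t ∈ P.parts, ∑ i ∈ t, f i ≤ m) :
    ∑ i ∈ s, f i ≤ #P.parts • m :=
  P.sum_sum_parts f ▸ sum_le_card_nsmul _ _ _ h

end Sum

variable {α : Type*} [DecidableEq α] {s : Finset α} {w : α → ℝ} {T : ℝ}

theorem exists_sum_lt_and_small_unique (hlt : ∀ i ∈ s, w i < T) :
    ∃ P : Finpartition s, (∀ t ∈ P.parts, ∑ i ∈ t, w i < T) ∧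
      ∀ t ∈ P.parts, ∀ u ∈ P.parts, ∑ i ∈ t, w i < T / 2 → ∑ i ∈ u, w i < T / 2 → t = u := by
  have hbot : ∀ t ∈ (⊥ : Finpartition s).parts, ∑ i ∈ t, w i < T := by
    simp only [parts_bot, mem_map, Function.Embedding.coeFn_mk, forall_exists_index, and_imp]
    rintro _ i hi rfl
    simpa using hlt i hi
  obtain ⟨P, hP, hmin⟩ := exists_min_image
    (univ.filter fun P : Finpartition s => ∀ t ∈ P.parts, ∑ i ∈ t, w i < T)
    (fun P => #P.parts) ⟨⊥, mem_filter.2 ⟨mem_univ _, hbot⟩⟩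
  replace hP := (mem_filter.1 hP).2
  refine ⟨P, hP, fun t ht u hu hts hus => ?_⟩
  by_contra htu
  have hmerge : ∀ v ∈ (P.merge ht hu).parts, ∑ i ∈ v, w i < T := by
    intro v hv
    rcases mem_insert.1 (P.parts_merge_subset ht hu hv) with rfl | hv
    · rw [sup_eq_union, sum_union (show Disjoint t u from P.disjoint ht hu htu)]
      linarith
    · exact hP v (mem_sdiff.1 hv).1
  exact (P.card_parts_merge_lt ht hu htu).not_ge
    (hmin _ (mem_filter.2 ⟨mem_univ _, hmerge⟩))

theorem exists_sum_mem_Icc (hw : ∀ i ∈ s, 0 ≤ w i) (hlt : ∀ i ∈ s, w i < T)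
    (hs : T / 2 ≤ ∑ i ∈ s, w i) :
    ∃ P : Finpartition s, ∀ t ∈ P.parts, ∑ i ∈ t, w i ∈ Set.Icc (T / 2) (3 * T / 2) := by
  obtain ⟨P, hP, hsmall⟩ := exists_sum_lt_and_small_unique hlt
  by_cases h : ∃ t ∈ P.parts, ∑ i ∈ t, w i < T / 2
  swap
  · push Not at h
    exact ⟨P, fun t ht => ⟨h t ht, by linarith [h t ht, hP t ht]⟩⟩
  obtain ⟨t, ht, hts⟩ := h
  have hbig : ∀ u ∈ P.parts, u ≠ t → T / 2 ≤ ∑ i ∈ u, w i := fun u hu hut =>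
    not_lt.1 fun hus => hut (hsmall u hu t ht hus hts)
  obtain ⟨u, hu, hut⟩ : ∃ u ∈ P.parts, u ≠ t := by
    by_contra! hall
    rw [← P.sum_sum_parts, eq_singleton_iff_unique_mem.2 ⟨ht, hall⟩, sum_singleton] at hs
    linarith
  have ht0 : 0 ≤ ∑ i ∈ t, w i := sum_nonneg fun i hi => hw i (P.le ht hi)
  refine ⟨P.merge ht hu, fun v hv => ?_⟩
  rcases mem_insert.1 (P.parts_merge_subset ht hu hv) with rfl | hv
  · rw [sup_eq_union, sum_union (show Disjoint t u from P.disjoint ht hu hut.symm)]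
    constructor <;> linarith [hbig u hu hut, hP u hu]
  · obtain ⟨hv, hvtu⟩ := mem_sdiff.1 hv
    have hvt : v ≠ t := fun h => hvtu (by simp [h])
    constructor <;> linarith [hbig v hv hvt, hP v hv]

end Finpartition

/-- clubbing: if `(S_1,…,S_ℓ)` is a partition of `[d]` with all blocks of
size `< T` (where `T ≥ 2` and `d ≥ T/2`), then there is a coarsening all of whose blocks
have size in `[T/2, 3T/2]`; consequently the number `ℓ'` of blocks of the coarsening
satisfies `2d/(3T) ≤ ℓ' ≤ 2d/T`. -/
theorem stmt7 (d ℓ : ℕ) (T : ℝ) (hT : 2 ≤ T)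
    (p : Fin ℓ → Finset (Fin d))
    (hpart : ∀ x : Fin d, ∃! j, x ∈ p j)
    (hsize : ∀ j, ((p j).card : ℝ) < T)
    (hd : T / 2 ≤ (d : ℝ)) :
    ∃ (ℓ' : ℕ) (q : Fin ℓ' → Finset (Fin d)) (c : Fin ℓ → Fin ℓ'),
      (∀ j, q j = (univ.filter fun i => c i = j).biUnion p) ∧
      (∀ j, T / 2 ≤ ((q j).card : ℝ) ∧ ((q j).card : ℝ) ≤ 3 * T / 2) ∧
      2 * d / (3 * T) ≤ (ℓ' : ℝ) ∧ (ℓ' : ℝ) ≤ 2 * d / T := by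
  have hT0 : 0 < T := by linarith
  have hcard (t : Finset (Fin ℓ)) : (#(t.biUnion p) : ℝ) = ∑ j ∈ t, (#(p j) : ℝ) := by
    rw [card_biUnion fun i _ j _ hij =>
      disjoint_left.2 fun x hi hj => hij ((hpart x).unique hi hj), Nat.cast_sum]
  have htotal : ∑ j, (#(p j) : ℝ) = d := by
    have hcover : univ.biUnion p = univ :=
      eq_univ_of_forall fun x => mem_biUnion.2 ⟨_, mem_univ _, (hpart x).exists.choose_spec⟩
    rw [← hcard, hcover]
    simp
  obtain ⟨P, hP⟩ := Finpartition.exists_sum_mem_Icc (s := univ) (fun j _ => by positivity)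
    (fun j _ => hsize j) (htotal ▸ hd)
  obtain ⟨c, hc⟩ := P.exists_filter_eq_mem_parts
  have hlow := P.card_parts_nsmul_le_sum fun t ht => (hP t ht).1
  have hhigh := P.sum_le_card_parts_nsmul fun t ht => (hP t ht).2
  rw [htotal, nsmul_eq_mul] at hlow hhigh
  refine ⟨#P.parts, _, c, fun _ => rfl, fun j => by rw [hcard]; exact hP _ (hc j), ?_, ?_⟩
  · rw [div_le_iff₀ (by positivity)]
    linarith
  · rw [le_div_iff₀ hT0]
    linarith
end

section
/- For all sufficiently large d and every integer Δ ≥ 2, suppose (S_1,...,S_ℓ) is a partition of [d] such that each |S_j| < T := d^{Δ/(Δ+1)}. Then for w chosen uniformly at random from {−1,1}^d, Pr[ Σ_{j=1}^ℓ |Σ_{i∈S_j} w_i| < d^{1/(Δ+1)}/10 ] ≤ d^{−d^{1/(Δ+1)}/12}. -/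
/-!
Write `m = d^{1/(Δ+1)}` and `T = d^{Δ/(Δ+1)}`, so that `d = m T`. A nonzero block sum has
absolute value at least `1`, so if `∑ⱼ |w(Sⱼ)| < m/10` then all blocks outside a set `B` of
fewer than `m/10` nonempty blocks have zero sum; there are at most `(d+1)^{m/10} ≤ d^{m/5}`
such `B`. The blocks outside `B` cover at least `9d/10` coordinates, their sums are independent,
and a block `S` has zero sum with probability at most `|S|^{-1/2} ≤ T^{-|S|/(2T)}`, because
`log x / x` decreases for `x ≥ e`. So each `B` contributes at most
`T^{-9d/(20T)} = d^{-(9/20)(Δ/(Δ+1)) m} ≤ d^{-3m/10}`, and `d^{m/5 - 3m/10} ≤ d^{-m/12}`.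
-/

open Finset Real Function

section Independence

variable {α β : Type*} [Fintype α] [DecidableEq α] [Fintype β]

theorem card_filter_and_mul_card_fun_eq (U : Finset α) {A B : (α → β) → Prop}
    [DecidablePred A] [DecidablePred B]
    (hA : ∀ w w', (∀ i ∈ U, w i = w' i) → A w → A w')
    (hB : ∀ w w', (∀ i ∉ U, w i = w' i) → B w → B w') :
    #{w | A w ∧ B w} * Fintype.card (α → β) = #{w | A w} * #{w | B w} := by
  rw [← card_univ, ← card_product, ← card_product]
  have swap_swap (w x : α → β) :
      U.piecewise (U.piecewise w x) (U.piecewise x w) = w ∧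
        U.piecewise (U.piecewise x w) (U.piecewise w x) = x := by
    constructor <;> ext i <;> by_cases hi : i ∈ U <;> simp [hi]
  refine card_nbij' (fun wx => (U.piecewise wx.1 wx.2, U.piecewise wx.2 wx.1))
    (fun wx => (U.piecewise wx.1 wx.2, U.piecewise wx.2 wx.1)) ?_ ?_ ?_ ?_
  · rintro ⟨w, x⟩ hwx
    simp only [mem_coe, mem_product, mem_filter, mem_univ, true_and, and_true] at hwx ⊢
    exact ⟨hA w _ (fun i hi => (piecewise_eq_of_mem _ _ _ hi).symm) hwx.1,
      hB w _ (fun i hi => (piecewise_eq_of_notMem _ _ _ hi).symm) hwx.2⟩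
  · rintro ⟨w, x⟩ hwx
    simp only [mem_coe, mem_product, mem_filter, mem_univ, true_and, and_true] at hwx ⊢
    exact ⟨hA w _ (fun i hi => (piecewise_eq_of_mem _ _ _ hi).symm) hwx.1,
      hB x _ (fun i hi => (piecewise_eq_of_notMem _ _ _ hi).symm) hwx.2⟩
  · rintro ⟨w, x⟩ -
    exact Prod.ext (swap_swap w x).1 (swap_swap w x).2
  · rintro ⟨w, x⟩ -
    exact Prod.ext (swap_swap w x).1 (swap_swap w x).2

theorem card_filter_forall_mem_div_card_fun_eq_prod [Nonempty β] {ι : Type*} (p : ι → Finset α)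
    (P : ι → (α → β) → Prop) [∀ j, DecidablePred (P j)]
    (hP : ∀ j w w', (∀ i ∈ p j, w i = w' i) → P j w → P j w')
    (Z : Finset ι) (hZ : (Z : Set ι).PairwiseDisjoint p) :
    (#{w | ∀ j ∈ Z, P j w} : ℝ) / Fintype.card (α → β) =
      ∏ j ∈ Z, (#{w | P j w} : ℝ) / Fintype.card (α → β) := by
  classical
  induction Z using Finset.induction_on with
  | empty => simp [card_univ]
  | @insert j₀ Z hj₀ ih =>
    rw [coe_insert, Set.pairwiseDisjoint_insert_of_notMem (by exact_mod_cast hj₀)] at hZ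
    have hsplit := card_filter_and_mul_card_fun_eq (p j₀) (hP j₀) (B := fun w => ∀ j ∈ Z, P j w)
      fun w w' hww' hw j hj =>
        hP j w w' (fun i hi => hww' i (disjoint_right.1 (hZ.2 j hj) hi)) (hw j hj)
    have hN : (0 : ℝ) < Fintype.card (α → β) := by exact_mod_cast Fintype.card_pos
    rw [prod_insert hj₀, ← ih hZ.1]
    simp only [forall_mem_insert]
    rw [div_mul_div_comm, eq_div_iff (by positivity)]
    field_simp
    exact_mod_cast hsplit

end Independence

section SignSum

variable {α : Type*}

noncomputable def signSum (S : Finset α) (w : α → Bool) : ℝ :=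
  ∑ i ∈ S, if w i then 1 else -1

theorem signSum_eq (S : Finset α) (w : α → Bool) :
    signSum S w = 2 * #{i ∈ S | w i} - #S := by
  rw [signSum, sum_ite, sum_const, sum_const, ← S.card_filter_add_card_filter_not (w ·)]
  simp only [nsmul_eq_mul, mul_one, mul_neg, Nat.cast_add]
  ring

theorem signSum_eq_intCast (S : Finset α) (w : α → Bool) :
    signSum S w = ((2 * #{i ∈ S | w i} - #S : ℤ) : ℝ) := by
  rw [signSum_eq]; push_cast; ring

theorem signSum_eq_zero_iff (S : Finset α) (w : α → Bool) :
    signSum S w = 0 ↔ 2 * #{i ∈ S | w i} = #S := by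
  rw [signSum_eq_intCast, Int.cast_eq_zero]
  omega

theorem one_le_abs_signSum {S : Finset α} {w : α → Bool} (h : signSum S w ≠ 0) :
    1 ≤ |signSum S w| := by
  rw [signSum_eq_intCast] at h ⊢
  exact_mod_cast Int.one_le_abs (by exact_mod_cast h)

theorem signSum_ne_zero_of_odd {S : Finset α} (hS : Odd #S) (w : α → Bool) : signSum S w ≠ 0 := by
  rw [Ne, signSum_eq_zero_iff]
  intro h
  exact Nat.not_even_iff_odd.2 hS ⟨_, h ▸ two_mul _⟩

theorem signSum_congr {S : Finset α} {w w' : α → Bool} (h : ∀ i ∈ S, w i = w' i) :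
    signSum S w = signSum S w' :=
  sum_congr rfl fun i hi => by rw [h i hi]

end SignSum

section Counting

variable {α β : Type*} [Fintype α] [DecidableEq α] [Fintype β] [DecidableEq β]

theorem card_filter_forall_mem_eq (S : Finset α) (g : α → β) :
    #{w : α → β | ∀ i ∈ S, w i = g i} = Fintype.card β ^ (Fintype.card α - #S) := by
  have : ({w : α → β | ∀ i ∈ S, w i = g i} : Finset _) =
      Fintype.piFinset fun i => if i ∈ S then {g i} else univ := by
    ext w
    simp only [mem_filter, mem_univ, true_and, Fintype.mem_piFinset]
    refine forall_congr' fun i => ?_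
    by_cases hi : i ∈ S <;> simp [hi]
  simp only [this, Fintype.card_piFinset, apply_ite card, card_singleton, card_univ]
  rw [prod_ite, prod_const_one, one_mul, prod_const, ← card_compl]
  congr 2
  ext
  simp

theorem card_filter_card_filter_eq (S : Finset α) (k : ℕ) :
    #{w : α → Bool | #{i ∈ S | w i} = k} = (#S).choose k * 2 ^ (Fintype.card α - #S) := by
  rw [card_eq_sum_card_fiberwise (f := fun w : α → Bool => {i ∈ S | w i}) (t := S.powersetCard k)
    (by intro w hw; simp_all [mem_powersetCard, filter_subset])]
  rw [← card_powersetCard, ← smul_eq_mul, ← sum_const]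
  refine sum_congr rfl fun A hA => ?_
  rw [mem_powersetCard] at hA
  rw [← Fintype.card_bool, ← card_filter_forall_mem_eq S (fun i => decide (i ∈ A)), filter_filter]
  congr 1
  refine filter_congr fun w _ => ?_
  constructor
  · rintro ⟨-, rfl⟩ i hi
    by_cases hw : w i <;> simp [hi, hw]
  · intro h
    have hA' : {i ∈ S | w i} = A := by
      ext i
      constructor
      · intro hi; rw [mem_filter] at hi; simpa [h i hi.1] using hi.2
      · intro hi; rw [mem_filter]; exact ⟨hA.1 hi, by simp [h i (hA.1 hi), hi]⟩
    exact ⟨by rw [hA', hA.2], hA'⟩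

end Counting

theorem Nat.centralBinom_sq_mul_le (k : ℕ) : k.centralBinom ^ 2 * (2 * k + 1) ≤ 16 ^ k := by
  induction k with
  | zero => simp
  | succ k ih =>
    have key : (k + 1) ^ 2 * ((k + 1).centralBinom ^ 2 * (2 * (k + 1) + 1)) ≤
        (k + 1) ^ 2 * 16 ^ (k + 1) :=
      calc (k + 1) ^ 2 * ((k + 1).centralBinom ^ 2 * (2 * (k + 1) + 1))
          = ((k + 1) * (k + 1).centralBinom) ^ 2 * (2 * k + 3) := by ring
        _ = (4 * (2 * k + 1) * (2 * k + 3)) * (k.centralBinom ^ 2 * (2 * k + 1)) := by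
          rw [Nat.succ_mul_centralBinom_succ]; ring
        _ ≤ (4 * (2 * k + 1) * (2 * k + 3)) * 16 ^ k := Nat.mul_le_mul_left _ ih
        _ ≤ ((k + 1) ^ 2 * 16) * 16 ^ k := Nat.mul_le_mul_right _ (by nlinarith)
        _ = (k + 1) ^ 2 * 16 ^ (k + 1) := by ring
    exact Nat.le_of_mul_le_mul_left key (by positivity)

theorem Nat.centralBinom_mul_sqrt_le (k : ℕ) : (k.centralBinom : ℝ) * √(2 * k) ≤ 4 ^ k := by
  rw [← sqrt_sq (by positivity : (0 : ℝ) ≤ 4 ^ k), ← sqrt_sq (Nat.cast_nonneg k.centralBinom),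
    ← sqrt_mul (sq_nonneg _)]
  refine Real.sqrt_le_sqrt ?_
  have := Nat.centralBinom_sq_mul_le k
  calc (k.centralBinom : ℝ) ^ 2 * (2 * k) ≤ k.centralBinom ^ 2 * (2 * k + 1) := by nlinarith
    _ ≤ 16 ^ k := by exact_mod_cast this
    _ = (4 ^ k) ^ 2 := by rw [← pow_mul, mul_comm, pow_mul]; norm_num

theorem log_div_self_le_of_two_le {s : ℕ} {T : ℝ} (hs : 2 ≤ s) (hsT : s ≤ T) (hT : 4 ≤ T) :
    log T / T ≤ log s / s := by
  have he : exp 1 ≤ 3 := (exp_one_lt_d9.trans (by norm_num)).le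
  obtain rfl | hs3 := hs.eq_or_lt
  · have h4 : log 4 / 4 = log 2 / 2 := by
      rw [show (4 : ℝ) = 2 ^ 2 by norm_num, log_pow]; ring
    simpa [h4] using log_div_self_antitoneOn (a := 4) (Set.mem_Ici.2 (by linarith))
      (Set.mem_Ici.2 (by linarith)) hT
  · have hs3' : (3 : ℝ) ≤ s := by exact_mod_cast hs3
    exact log_div_self_antitoneOn (Set.mem_Ici.2 (by linarith)) (Set.mem_Ici.2 (by linarith)) hsT

theorem inv_sqrt_le_rpow {s : ℕ} {T : ℝ} (hs : 2 ≤ s) (hsT : s ≤ T) (hT : 4 ≤ T) :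
    (√s)⁻¹ ≤ T ^ (-s / (2 * T)) := by
  have hs0 : (0 : ℝ) < s := by positivity
  have hT0 : 0 < T := by linarith
  have key := log_div_self_le_of_two_le hs hsT hT
  rw [div_le_div_iff₀ hT0 hs0] at key
  rw [rpow_def_of_pos hT0, sqrt_eq_rpow, ← rpow_neg hs0.le, rpow_def_of_pos hs0]
  refine exp_le_exp.2 ?_
  rw [mul_div_assoc', le_div_iff₀ (by positivity)]
  nlinarith

section AntiConcentration

variable {α : Type*} [Fintype α] [DecidableEq α]

theorem card_signSum_eq_zero_mul_sqrt_le (S : Finset α) :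
    (#{w | signSum S w = 0} : ℝ) * √(#S) ≤ 2 ^ Fintype.card α := by
  obtain ⟨k, hk⟩ | hodd := (#S).even_or_odd
  · rw [← two_mul] at hk
    have hcount : #{w | signSum S w = 0} = (2 * k).choose k * 2 ^ (Fintype.card α - 2 * k) := by
      rw [← hk, ← card_filter_card_filter_eq S k]
      congr 1
      exact filter_congr fun w _ => by rw [signSum_eq_zero_iff]; omega
    have hS : 2 * k ≤ Fintype.card α := hk ▸ card_le_univ S
    rw [hcount, hk]
    calc (((2 * k).choose k * 2 ^ (Fintype.card α - 2 * k) : ℕ) : ℝ) * √((2 * k : ℕ) : ℝ)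
        = ((k.centralBinom : ℝ) * √(2 * k)) * 2 ^ (Fintype.card α - 2 * k) := by
          rw [Nat.centralBinom]; push_cast; ring
      _ ≤ 4 ^ k * 2 ^ (Fintype.card α - 2 * k) := by
          gcongr; exact Nat.centralBinom_mul_sqrt_le k
      _ = 2 ^ Fintype.card α := by
          rw [show (4 : ℝ) = 2 ^ 2 by norm_num, ← pow_mul, ← pow_add, Nat.add_sub_cancel' hS]
  · rw [filter_false_of_mem fun w _ => signSum_ne_zero_of_odd hodd w]
    simp


theorem card_signSum_eq_zero_le_rpow (S : Finset α) {T : ℝ} (hST : #S ≤ T) (hT : 4 ≤ T) :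
    (#{w | signSum S w = 0} : ℝ) ≤ 2 ^ Fintype.card α * T ^ (-#S / (2 * T)) := by
  obtain hS | hS | hS : #S = 0 ∨ #S = 1 ∨ 2 ≤ #S := by omega
  · rw [hS, Nat.cast_zero, neg_zero, zero_div, rpow_zero, mul_one]
    exact_mod_cast (card_filter_le _ _).trans_eq (by simp)
  · rw [filter_false_of_mem fun w _ => signSum_ne_zero_of_odd (hS ▸ odd_one) w]
    simp only [card_empty, Nat.cast_zero]
    positivity
  · have hsqrt : (0 : ℝ) < √(#S) := by positivity
    calc (#{w | signSum S w = 0} : ℝ) ≤ 2 ^ Fintype.card α * (√(#S))⁻¹ := by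
          rw [← div_eq_mul_inv, le_div_iff₀ hsqrt]
          exact card_signSum_eq_zero_mul_sqrt_le S
      _ ≤ 2 ^ Fintype.card α * T ^ (-#S / (2 * T)) := by
          gcongr; exact inv_sqrt_le_rpow hS hST hT

end AntiConcentration

theorem card_filter_powerset_card_le_le {ι : Type*} (J : Finset ι) (b : ℕ) :
    #{B ∈ J.powerset | #B ≤ b} ≤ (#J + 1) ^ b := by
  classical
  have hsub : {B ∈ J.powerset | #B ≤ b} ⊆ (range (b + 1)).biUnion J.powersetCard := by
    intro B hB
    rw [mem_filter, mem_powerset] at hB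
    exact mem_biUnion.2 ⟨#B, mem_range.2 (Nat.lt_succ_of_le hB.2), mem_powersetCard.2 ⟨hB.1, rfl⟩⟩
  calc #{B ∈ J.powerset | #B ≤ b} ≤ ∑ i ∈ range (b + 1), #(J.powersetCard i) :=
        (card_le_card hsub).trans card_biUnion_le
    _ ≤ ∑ i ∈ range (b + 1), #J ^ i * 1 ^ (b - i) * b.choose i := by
        refine sum_le_sum fun i hi => ?_
        rw [card_powersetCard, one_pow, mul_one]
        exact (Nat.choose_le_pow _ _).trans
          (Nat.le_mul_of_pos_right _ (Nat.choose_pos (Nat.lt_succ_iff.1 (mem_range.1 hi))))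
    _ = (#J + 1) ^ b := (add_pow _ _ _).symm

section Partition

variable {α ι : Type*} [Fintype α] [DecidableEq α] [Fintype ι]

theorem sum_card_eq_card_of_pairwise_disjoint {p : ι → Finset α}
    (hdisj : Pairwise (Disjoint on p)) (hcover : ∀ x, ∃ j, x ∈ p j) :
    ∑ j, #(p j) = Fintype.card α := by
  rw [← card_biUnion fun j _ j' _ hjj' => hdisj hjj', ← card_univ]
  congr 1
  exact eq_univ_of_forall fun x => mem_biUnion.2 ((hcover x).imp fun j hj => ⟨mem_univ j, hj⟩)

variable [DecidableEq ι]

theorem filter_sum_abs_signSum_lt_subset (p : ι → Finset α) (c : ℝ) :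
    ({w | ∑ j, |signSum (p j) w| < c} : Finset (α → Bool)) ⊆
      {B ∈ ({j | (p j).Nonempty} : Finset ι).powerset | #B ≤ ⌊c⌋₊}.biUnion
        fun B => {w | ∀ j ∈ Bᶜ, signSum (p j) w = 0} := by
  intro w hw
  rw [mem_filter] at hw
  set B : Finset ι := {j | signSum (p j) w ≠ 0}
  have hBc : (#B : ℝ) ≤ c := by
    calc (#B : ℝ) = ∑ j ∈ B, 1 := by simp
      _ ≤ ∑ j ∈ B, |signSum (p j) w| :=
          sum_le_sum fun j hj => one_le_abs_signSum (mem_filter.1 hj).2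
      _ ≤ ∑ j, |signSum (p j) w| :=
          sum_le_sum_of_subset_of_nonneg (subset_univ B) fun j _ _ => abs_nonneg _
      _ ≤ c := hw.2.le
  refine mem_biUnion.2 ⟨B, mem_filter.2 ⟨mem_powerset.2 fun j hj => ?_, Nat.le_floor hBc⟩, ?_⟩
  · refine mem_filter.2 ⟨mem_univ j, nonempty_iff_ne_empty.2 fun hpj => ?_⟩
    exact (mem_filter.1 hj).2 (by rw [hpj, signSum, sum_empty])
  · refine mem_filter.2 ⟨mem_univ w, fun j hj => ?_⟩
    simpa [B] using hj

theorem card_filter_forall_mem_compl_signSum_eq_zero_le {p : ι → Finset α}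
    (hdisj : Pairwise (Disjoint on p)) (hsum : ∑ j, #(p j) = Fintype.card α) {T c : ℝ}
    (hT : 4 ≤ T) (hsize : ∀ j, #(p j) ≤ T) {B : Finset ι} (hB : #B ≤ c) :
    (#{w | ∀ j ∈ Bᶜ, signSum (p j) w = 0} : ℝ) ≤
      2 ^ Fintype.card α * T ^ (-(Fintype.card α - c * T) / (2 * T)) := by
  have hprod : (#{w | ∀ j ∈ Bᶜ, signSum (p j) w = 0} : ℝ) / 2 ^ Fintype.card α =
      ∏ j ∈ Bᶜ, (#{w | signSum (p j) w = 0} : ℝ) / 2 ^ Fintype.card α := by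
    convert card_filter_forall_mem_div_card_fun_eq_prod p (fun j w => signSum (p j) w = 0)
      (fun j w w' h hw => (signSum_congr h).symm.trans hw) Bᶜ (hdisj.set_pairwise _) using 2 <;>
    simp
  rw [div_eq_iff (by positivity)] at hprod
  have hmass : (Fintype.card α : ℝ) - c * T ≤ ∑ j ∈ Bᶜ, (#(p j) : ℝ) := by
    have hB' : ∑ j ∈ B, (#(p j) : ℝ) ≤ c * T :=
      (sum_le_card_nsmul B _ T fun j _ => hsize j).trans
        (by rw [nsmul_eq_mul]; exact mul_le_mul_of_nonneg_right hB (by linarith))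
    have hsumR : ∑ j, (#(p j) : ℝ) = Fintype.card α := by exact_mod_cast hsum
    rw [← sum_add_sum_compl B] at hsumR
    linarith
  rw [hprod, mul_comm]
  gcongr
  calc ∏ j ∈ Bᶜ, (#{w | signSum (p j) w = 0} : ℝ) / 2 ^ Fintype.card α
      ≤ ∏ j ∈ Bᶜ, T ^ (-#(p j) / (2 * T)) := by
        refine prod_le_prod (fun j _ => by positivity) fun j _ => ?_
        rw [div_le_iff₀' (by positivity)]
        exact card_signSum_eq_zero_le_rpow (p j) (hsize j) hT
    _ = T ^ (-(∑ j ∈ Bᶜ, (#(p j) : ℝ)) / (2 * T)) := by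
        rw [← rpow_sum_of_pos (by linarith), ← sum_div, sum_neg_distrib]
    _ ≤ T ^ (-(Fintype.card α - c * T) / (2 * T)) := by
        gcongr
        linarith

theorem card_sum_abs_signSum_lt_le {p : ι → Finset α} (hdisj : Pairwise (Disjoint on p))
    (hcover : ∀ x, ∃ j, x ∈ p j) {T c : ℝ} (hT : 4 ≤ T) (hsize : ∀ j, #(p j) ≤ T) (hc : 0 ≤ c) :
    (#{w | ∑ j, |signSum (p j) w| < c} : ℝ) ≤
      (Fintype.card α + 1) ^ ⌊c⌋₊ *
        (2 ^ Fintype.card α * T ^ (-(Fintype.card α - c * T) / (2 * T))) := by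
  have hsum := sum_card_eq_card_of_pairwise_disjoint hdisj hcover
  set J : Finset ι := {j | (p j).Nonempty}
  have hJ : #J ≤ Fintype.card α :=
    calc #J = ∑ j ∈ J, 1 := by simp
      _ ≤ ∑ j ∈ J, #(p j) := sum_le_sum fun j hj => card_pos.2 (mem_filter.1 hj).2
      _ ≤ ∑ j, #(p j) := sum_le_sum_of_subset (subset_univ J)
      _ = Fintype.card α := hsum
  have hBs : (#{B ∈ J.powerset | #B ≤ ⌊c⌋₊} : ℝ) ≤ (Fintype.card α + 1) ^ ⌊c⌋₊ := by
    exact_mod_cast (card_filter_powerset_card_le_le J ⌊c⌋₊).trans (by gcongr)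
  calc (#{w | ∑ j, |signSum (p j) w| < c} : ℝ)
      ≤ ∑ B ∈ {B ∈ J.powerset | #B ≤ ⌊c⌋₊}, (#{w | ∀ j ∈ Bᶜ, signSum (p j) w = 0} : ℝ) := by
        exact_mod_cast (card_le_card (filter_sum_abs_signSum_lt_subset p c)).trans card_biUnion_le
    _ ≤ _ := by
        refine (sum_le_card_nsmul _ _
          (2 ^ Fintype.card α * T ^ (-(Fintype.card α - c * T) / (2 * T))) fun B hB => ?_).trans ?_
        · exact card_filter_forall_mem_compl_signSum_eq_zero_le hdisj hsum hT hsize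
            ((Nat.cast_le.2 (mem_filter.1 hB).2).trans (Nat.floor_le hc))
        · rw [nsmul_eq_mul]
          gcongr

end Partition

theorem add_one_pow_floor_mul_rpow_le {d m θ : ℝ} (hd : 2 ≤ d) (hm : 0 ≤ m) (hθ : 2 / 3 ≤ θ) :
    (d + 1) ^ ⌊m / 10⌋₊ * (d ^ θ) ^ (-(9 / 20) * m) ≤ d ^ (-m / 12) := by
  have hd1 : 1 ≤ d := by linarith
  have hcount : (d + 1) ^ ⌊m / 10⌋₊ ≤ d ^ (m / 5) :=
    calc (d + 1) ^ ⌊m / 10⌋₊ ≤ (d ^ (2 : ℝ)) ^ ⌊m / 10⌋₊ := by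
          gcongr; rw [rpow_two]; nlinarith
      _ = d ^ (2 * ⌊m / 10⌋₊ : ℝ) := by rw [← rpow_natCast, ← rpow_mul (by linarith)]
      _ ≤ d ^ (m / 5) := rpow_le_rpow_of_exponent_le hd1
          (by linarith [Nat.floor_le (div_nonneg hm (by norm_num : (0 : ℝ) ≤ 10))])
  calc (d + 1) ^ ⌊m / 10⌋₊ * (d ^ θ) ^ (-(9 / 20) * m)
      ≤ d ^ (m / 5) * d ^ (-(3 / 10) * m) := by
        rw [← rpow_mul (by linarith)]
        exact mul_le_mul hcount (rpow_le_rpow_of_exponent_le hd1 (by nlinarith)) (by positivity)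
          (by positivity)
    _ = d ^ (-m / 10) := by rw [← rpow_add (by linarith)]; ring_nf
    _ ≤ d ^ (-m / 12) := rpow_le_rpow_of_exponent_le hd1 (by linarith)

/-- for sufficiently large `d`, any `Δ ≥ 2`, and any partition of `[d]`
into blocks of size `< d^{Δ/(Δ+1)}`, a uniformly random sign vector `w ∈ {-1,1}^d`
satisfies `Σ_j |w_{S_j}| ≥ d^{1/(Δ+1)}/10` except with probability at most
`d^{-d^{1/(Δ+1)}/12}`. -/
theorem stmt8 :
    ∃ d₀ : ℕ, ∀ d : ℕ, d₀ ≤ d → ∀ Δ : ℕ, 2 ≤ Δ →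
      ∀ (ℓ : ℕ) (p : Fin ℓ → Finset (Fin d)),
        (∀ x : Fin d, ∃! j, x ∈ p j) →
        (∀ j, ((p j).card : ℝ) < (d : ℝ) ^ ((Δ : ℝ) / (Δ + 1))) →
        ((univ.filter fun w : Fin d → Bool =>
              (∑ j, |∑ i ∈ p j, (if w i then (1 : ℝ) else -1)|) <
                (d : ℝ) ^ ((1 : ℝ) / (Δ + 1)) / 10).card : ℝ) / 2 ^ d ≤
          (d : ℝ) ^ (-(d : ℝ) ^ ((1 : ℝ) / (Δ + 1)) / 12) := by
  refine ⟨16, fun d hd Δ hΔ ℓ p hp hsize => ?_⟩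
  have hd16 : (16 : ℝ) ≤ d := by exact_mod_cast hd
  have hΔ1 : (0 : ℝ) < Δ + 1 := by positivity
  have hθ : 2 / 3 ≤ (Δ : ℝ) / (Δ + 1) := by
    rw [div_le_div_iff₀ (by norm_num) hΔ1]; linarith [(Nat.ofNat_le_cast.2 hΔ : (2 : ℝ) ≤ Δ)]
  set m := (d : ℝ) ^ ((1 : ℝ) / (Δ + 1))
  set T := (d : ℝ) ^ ((Δ : ℝ) / (Δ + 1))
  have hmT : m * T = d := by
    rw [← rpow_add (by linarith), ← add_div, add_comm, div_self hΔ1.ne', rpow_one]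
  have hT : 4 ≤ T :=
    calc (4 : ℝ) = √16 := by rw [show (16 : ℝ) = 4 ^ 2 by norm_num, sqrt_sq (by norm_num)]
      _ ≤ (d : ℝ) ^ ((1 : ℝ) / 2) := by rw [← sqrt_eq_rpow]; exact sqrt_le_sqrt hd16
      _ ≤ T := rpow_le_rpow_of_exponent_le (by linarith) (by linarith)
  have hdisj : Pairwise (Disjoint on p) := fun j j' hjj' =>
    disjoint_left.2 fun x hj hj' => hjj' ((hp x).unique hj hj')
  have key := card_sum_abs_signSum_lt_le hdisj (fun x => (hp x).exists) hT
    (fun j => (hsize j).le) (c := m / 10) (by positivity)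
  have hexp : -(Fintype.card (Fin d) - m / 10 * T) / (2 * T) = -(9 / 20) * m := by
    rw [Fintype.card_fin, ← hmT]; field_simp; ring
  rw [hexp, Fintype.card_fin] at key
  calc _ ≤ (d + 1) ^ ⌊m / 10⌋₊ * (2 ^ d * T ^ (-(9 / 20) * m)) / 2 ^ d := by
        gcongr; exact key
    _ = (d + 1) ^ ⌊m / 10⌋₊ * T ^ (-(9 / 20) * m) := by field_simp
    _ ≤ _ := add_one_pow_floor_mul_rpow_le (by linarith) (by positivity) hθ
end
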